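/- arXiv:math/0309201 — 2 statements merged into one kernel-verified Lean document; each statement's English description precedes it below -/
import Mathlib

section
/- For k ≥ 2 and i = 1,…,k, let h̄_i = (6i² - 6i + 1 + 6k² - 12ki + 5k)/(12(2k+1)). Then the k×k Vandermonde determinant det[(h̄_j)^{i-1}]_{1≤i,j≤k} equals (∏_{i=1}^{k-1} (2i)!)/(-4k-2)^{k(k-1)/2}. -/
open scoped BigOperators

private lemma fac_shift (m n : ℕ) :
    n.factorial * ∏ j ∈ Finset.range m, (n + 1 + j) = (n + m).factorial := by
  induction m with
  | zero => simp
  | succ m ih =>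
    rw [Finset.prod_range_succ, ← mul_assoc, ih]
    rw [show n + (m+1) = (n+m)+1 by ring, Nat.factorial_succ]
    ring

private lemma aux1 (n : ℕ) :
    ∏ t ∈ Finset.range n, ((t + 1) * (2 * n - t)) = (2 * n).factorial := by
  rw [Finset.prod_mul_distrib, Finset.prod_range_add_one_eq_factorial]
  have h : ∏ t ∈ Finset.range n, (2 * n - t) = ∏ t ∈ Finset.range n, (n + 1 + t) := by
    rw [← Finset.prod_range_reflect (fun j => n + 1 + j) n]
    apply Finset.prod_congr rfl
    intro x hx
    simp only [Finset.mem_range] at hx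
    omega
  rw [h, fac_shift]
  congr 1
  omega

private lemma inner_prod (k : ℕ) (i : Fin k) :
    ∏ j ∈ Finset.Ioi i, (((j : ℕ) - i) * (2 * k - 1 - i - j)) =
      (2 * (k - 1 - (i : ℕ))).factorial := by
  have hi : (i : ℕ) < k := i.isLt
  rw [← aux1 (k - 1 - (i : ℕ))]
  refine Finset.prod_nbij' (fun j => (j : ℕ) - i - 1)
    (fun t => Fin.mk (((i : ℕ) + 1 + t) % k) (Nat.mod_lt _ (by omega))) ?_ ?_ ?_ ?_ ?_
  · intro a ha
    simp only [Finset.mem_Ioi, Fin.lt_def] at ha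
    simp only [Finset.mem_range]
    omega
  · intro t ht
    simp only [Finset.mem_range] at ht
    simp only [Finset.mem_Ioi, Fin.lt_def]
    have : ((i:ℕ) + 1 + t) % k = (i:ℕ) + 1 + t := Nat.mod_eq_of_lt (by omega)
    simp [this]
    omega
  · intro a ha
    simp only [Finset.mem_Ioi, Fin.lt_def] at ha
    have ha' : (a : ℕ) < k := a.isLt
    apply Fin.ext
    simp only []
    have : ((i:ℕ) + 1 + ((a:ℕ) - i - 1)) % k = (i:ℕ) + 1 + ((a:ℕ) - i - 1) := Nat.mod_eq_of_lt (by omega)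
    rw [this]
    omega
  · intro t ht
    simp only [Finset.mem_range] at ht
    have : ((i:ℕ) + 1 + t) % k = (i:ℕ) + 1 + t := Nat.mod_eq_of_lt (by omega)
    simp only [this]
    omega
  · intro a ha
    simp only [Finset.mem_Ioi, Fin.lt_def] at ha
    have ha' : (a : ℕ) < k := a.isLt
    beta_reduce
    have h1 : (a:ℕ) - i - 1 + 1 = (a:ℕ) - i := by omega
    rw [h1]
    congr 1
    omega

/-- The Vandermonde determinant of the shifted conformal weights
`h̄ᵢ = (6i²-6i+1+6k²-12ki+5k)/(12(2k+1))`, `i = 1,…,k`, equals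
`(∏_{i=1}^{k-1} (2i)!)/(-4k-2)^{k(k-1)/2}`. -/
theorem vandermonde_shifted_weights (k : ℕ) (hk : 2 ≤ k) (hbar : ℕ → ℚ)
    (hh : ∀ i, hbar i = (6 * (i : ℚ) ^ 2 - 6 * i + 1 + 6 * (k : ℚ) ^ 2 - 12 * k * i + 5 * k)
        / (12 * (2 * (k : ℚ) + 1))) :
    Matrix.det (Matrix.of fun i j : Fin k => hbar (j + 1) ^ (i : ℕ))
      = (∏ i ∈ Finset.range (k - 1), ((2 * (i + 1)).factorial : ℚ))
        / (-4 * (k : ℚ) - 2) ^ (k * (k - 1) / 2) := by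
  have hkq : (0:ℚ) ≤ (k:ℚ) := Nat.cast_nonneg k
  have hd1 : (12:ℚ) * (2 * (k:ℚ) + 1) ≠ 0 := by positivity
  have hd2 : (-4 * (k:ℚ) - 2) ≠ 0 := by intro h; nlinarith
  set N : Fin k → Fin k → ℕ := fun i j => ((j : ℕ) - i) * (2 * k - 1 - i - j) with hN
  have hmat : (Matrix.of fun i j : Fin k => hbar (j + 1) ^ (i : ℕ))
      = Matrix.transpose (Matrix.vandermonde (fun j : Fin k => hbar (j + 1))) := by
    ext i j
    simp [Matrix.transpose_apply, Matrix.vandermonde_apply]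
  rw [hmat, Matrix.det_transpose, Matrix.det_vandermonde]
  have key : ∀ i j : Fin k, i < j →
      hbar (j + 1) - hbar (i + 1) = ((N i j : ℕ) : ℚ) / (-4 * (k:ℚ) - 2) := by
    intro i j hij
    have hij' : (i:ℕ) < (j:ℕ) := hij
    have hjk : (j:ℕ) < k := j.isLt
    have e1 : ((N i j : ℕ) : ℚ) = ((j:ℚ) - i) * (2 * (k:ℚ) - 1 - i - j) := by
      simp only [hN]
      rw [show 2 * k - 1 - (i:ℕ) - (j:ℕ) = 2 * k - (1 + (i:ℕ) + (j:ℕ)) by omega]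
      push_cast [Nat.cast_sub (le_of_lt hij'),
        Nat.cast_sub (show 1 + (i:ℕ) + (j:ℕ) ≤ 2 * k by omega)]
      ring
    rw [hh, hh, e1, div_sub_div_same, div_eq_div_iff hd1 hd2]
    push_cast
    ring
  have step1 : (∏ i : Fin k, ∏ j ∈ Finset.Ioi i, (hbar (↑j + 1) - hbar (↑i + 1)))
      = ∏ i : Fin k, ∏ j ∈ Finset.Ioi i, (((N i j : ℕ) : ℚ) / (-4 * (k:ℚ) - 2)) :=
    Finset.prod_congr rfl fun i _ => Finset.prod_congr rfl fun j hj =>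
      key i j (Finset.mem_Ioi.mp hj)
  rw [step1]
  simp only [Finset.prod_div_distrib, Finset.prod_const]
  rw [Finset.prod_pow_eq_pow_sum]
  have hexp : (∑ i : Fin k, (Finset.Ioi i).card) = k * (k - 1) / 2 := by
    have h1 : (∑ i : Fin k, (Finset.Ioi i).card) = ∑ i ∈ Finset.range k, (k - 1 - i) := by
      rw [← Fin.sum_univ_eq_sum_range (fun i => k - 1 - i) k]
      exact Finset.sum_congr rfl fun i _ => Fin.card_Ioi i
    rw [h1, Finset.sum_range_reflect (fun j => j) k]
    exact Finset.sum_range_id k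
  rw [hexp]
  congr 1
  rw [← Nat.cast_prod]
  have h2 : (∏ i : Fin k, ∏ j ∈ Finset.Ioi i, N i j)
      = ∏ i ∈ Finset.range (k - 1), (2 * (i + 1)).factorial := by
    have h3 : (∏ i : Fin k, ∏ j ∈ Finset.Ioi i, N i j)
        = ∏ i : Fin k, (2 * (k - 1 - (i : ℕ))).factorial :=
      Finset.prod_congr rfl fun i _ => inner_prod k i
    rw [h3, Fin.prod_univ_eq_prod_range (fun i => (2 * (k - 1 - i)).factorial) k,
      Finset.prod_range_reflect (fun j => (2 * j).factorial) k]
    conv_lhs => rw [show k = k - 1 + 1 by omega]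
    rw [Finset.prod_range_succ']
    simp
  rw [← h2, Nat.cast_prod]
  exact Finset.prod_congr rfl fun i _ => (Nat.cast_prod _ _).symm
end

section
/- Fix k ≥ 2. For i = 1,…,k let y_i = q^{h̄_i}·∏_{n≥1, n≢0,±i mod 2k+1} 1/(1-q^n), where h̄_i = (6i²-6i+1+6k²-12ki+5k)/(12(2k+1)). Then ∏_{i=1}^k y_i = q^{k(k-1)/12}·((q^{2k+1};q^{2k+1})_∞/(q;q)_∞)^{k-1} = (η((2k+1)τ)/η(τ))^{k-1}. -/
/-!
The prefactors multiply to `q^{k(k-1)/12}` because `∑ᵢ h̄ᵢ = k(k-1)/12`. For the products,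
fix `m` with `2k+1 ∤ m` and let `r = m mod (2k+1)`: exactly one `i ∈ [1, k]`, namely
`min(r, 2k+1-r)`, satisfies `m ≡ ±i`, so `(1 - qᵐ)⁻¹` occurs in exactly `k - 1` of the
`k` products. Their product is therefore `(∏_{2k+1 ∤ m} (1 - qᵐ)⁻¹)^{k-1}`, and multiplying
`∏_{2k+1 ∤ m} (1 - qᵐ)⁻¹` by `(q;q)_∞` leaves `(q^{2k+1};q^{2k+1})_∞`.
The η form follows from `q^{(2k+1)/24} / q^{1/24} = q^{k/12}`.
-/

open scoped BigOperators Real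

open Complex

/-- Dedekind eta function (q-product form). -/
noncomputable def dedekindEta (τ : ℂ) : ℂ :=
  Complex.exp (2 * π * I * τ / 24) * ∏' n : ℕ, (1 - Complex.exp (2 * π * I * τ) ^ (n + 1))

open scoped Finset

section OneSub

variable {ι K : Type*} [NormedField K] [CompleteSpace K] {x : ι → K}

lemma multipliable_one_sub (hx : Summable (‖x ·‖)) : Multipliable fun i ↦ 1 - x i := by
  simpa [sub_eq_add_neg] using multipliable_one_add_of_summable (f := fun i ↦ -x i) (by simpa)

lemma tprod_one_sub_ne_zero (hx : Summable (‖x ·‖)) (hx1 : ∀ i, x i ≠ 1) :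
    ∏' i, (1 - x i) ≠ 0 := by
  simpa [sub_eq_add_neg] using tprod_one_add_ne_zero_of_summable (f := fun i ↦ -x i)
    (fun i ↦ by simpa [← sub_eq_add_neg, sub_eq_zero] using (hx1 i).symm) (by simpa)

lemma multipliable_inv_one_sub (hx : Summable (‖x ·‖)) (hx1 : ∀ i, x i ≠ 1) :
    Multipliable fun i ↦ (1 - x i)⁻¹ :=
  (multipliable_one_sub hx).inv₀ (tprod_one_sub_ne_zero hx hx1)

end OneSub

lemma tprod_ite_mod_eq_zero {M : Type*} [CommMonoid M] [TopologicalSpace M] (N : ℕ)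
    (f : ℕ → M) :
    ∏' n : ℕ, (if (n + 1) % (N + 1) = 0 then f (n + 1) else 1)
      = ∏' m : ℕ, f ((N + 1) * (m + 1)) := by
  have hinj : Function.Injective fun m : ℕ ↦ (N + 1) * m + N := fun a b h ↦
    Nat.eq_of_mul_eq_mul_left N.succ_pos (Nat.add_right_cancel h)
  rw [← hinj.tprod_eq]
  · refine tprod_congr fun m ↦ ?_
    rw [show (N + 1) * m + N + 1 = (N + 1) * (m + 1) by ring, Nat.mul_mod_right, if_pos rfl]
  · intro n hn
    have hdvd : (n + 1) % (N + 1) = 0 := by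
      by_contra h
      simp [h] at hn
    obtain ⟨_ | c, hc⟩ := Nat.dvd_of_mod_eq_zero hdvd
    · simp at hc
    · exact ⟨c, by linarith⟩

section PowersInDisc

variable {q : ℂ}

lemma pow_succ_ne_one (hq : ‖q‖ < 1) (n : ℕ) : q ^ (n + 1) ≠ 1 := fun h ↦ by
  simpa [← norm_pow, h] using pow_lt_one₀ (norm_nonneg q) hq n.succ_ne_zero

lemma summable_norm_pow_succ (hq : ‖q‖ < 1) : Summable fun n ↦ ‖q ^ (n + 1)‖ := by
  simpa using (summable_nat_add_iff 1).mpr (summable_geometric_of_lt_one (norm_nonneg q) hq)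

lemma summable_norm_ite_pow_succ (hq : ‖q‖ < 1) (p : ℕ → Prop) [DecidablePred p] :
    Summable fun n ↦ ‖if p n then q ^ (n + 1) else 0‖ :=
  (summable_norm_pow_succ hq).of_nonneg_of_le (fun _ ↦ norm_nonneg _) fun n ↦ by
    split_ifs <;> simp

lemma tprod_one_sub_pow_ne_zero (hq : ‖q‖ < 1) : ∏' n : ℕ, (1 - q ^ (n + 1)) ≠ 0 :=
  tprod_one_sub_ne_zero (summable_norm_pow_succ hq) (pow_succ_ne_one hq)

lemma multipliable_ite_inv_one_sub_pow (hq : ‖q‖ < 1) (p : ℕ → Prop) [DecidablePred p] :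
    Multipliable fun n ↦ if p n then (1 - q ^ (n + 1))⁻¹ else 1 := by
  have hinv := multipliable_inv_one_sub (summable_norm_ite_pow_succ hq p) fun n ↦ by
    split_ifs
    · exact pow_succ_ne_one hq n
    · exact zero_ne_one
  refine hinv.congr fun n ↦ ?_
  split_ifs <;> simp

lemma tprod_ite_inv_one_sub_pow (hq : ‖q‖ < 1) (N : ℕ) :
    ∏' n : ℕ, (if ¬(n + 1) % (N + 1) = 0 then (1 - q ^ (n + 1))⁻¹ else 1)
      = (∏' n : ℕ, (1 - (q ^ (N + 1)) ^ (n + 1))) / ∏' n : ℕ, (1 - q ^ (n + 1)) := by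
  have hmultiples : ∏' n : ℕ, (1 - (q ^ (N + 1)) ^ (n + 1))
      = ∏' n : ℕ, (if (n + 1) % (N + 1) = 0 then 1 - q ^ (n + 1) else 1) := by
    simp_rw [← pow_mul]
    exact (tprod_ite_mod_eq_zero N fun j ↦ 1 - q ^ j).symm
  rw [hmultiples, eq_div_iff (tprod_one_sub_pow_ne_zero hq),
    ← (multipliable_ite_inv_one_sub_pow hq _).tprod_mul (ModularForm.multipliable_one_sub_pow hq)]
  refine tprod_congr fun n ↦ ?_
  split_ifs
  · exact one_mul _
  · exact inv_mul_cancel₀ (sub_ne_zero.mpr (pow_succ_ne_one hq n).symm)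

end PowersInDisc

lemma add_mod_eq_zero_iff_of_lt {N m i : ℕ} (hm : m % N ≠ 0) (hi : i < N) :
    (m + i) % N = 0 ↔ m % N + i = N := by
  have hr : m % N < N := Nat.mod_lt m (by omega)
  rw [Nat.add_mod, Nat.mod_eq_of_lt hi]
  by_cases h : m % N + i < N
  · rw [Nat.mod_eq_of_lt h]
    omega
  · rw [Nat.mod_eq_sub_mod (not_lt.mp h), Nat.mod_eq_of_lt (by omega)]
    omega

lemma card_filter_Icc_mod_eq_or_add_mod_eq_zero {k m : ℕ} (hm : m % (2 * k + 1) ≠ 0) :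
    #{i ∈ Finset.Icc 1 k | m % (2 * k + 1) = i ∨ (m + i) % (2 * k + 1) = 0} = 1 := by
  have hr : m % (2 * k + 1) < 2 * k + 1 := Nat.mod_lt m (by omega)
  rw [Finset.card_eq_one]
  refine ⟨min (m % (2 * k + 1)) (2 * k + 1 - m % (2 * k + 1)), ?_⟩
  ext i
  simp only [Finset.mem_filter, Finset.mem_Icc, Finset.mem_singleton]
  by_cases hi : 1 ≤ i ∧ i ≤ k
  · rw [add_mod_eq_zero_iff_of_lt hm (by omega)]
    omega
  · omega

lemma prod_Icc_ite_mod {M : Type*} [CommMonoid M] (k m : ℕ) (a : M) :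
    ∏ i ∈ Finset.Icc 1 k, (if ¬(m % (2 * k + 1) = 0 ∨ m % (2 * k + 1) = i
        ∨ (m + i) % (2 * k + 1) = 0) then a else 1)
      = (if ¬m % (2 * k + 1) = 0 then a else 1) ^ (k - 1) := by
  by_cases hm : m % (2 * k + 1) = 0
  · simp [hm]
  simp only [hm, false_or, not_false_eq_true, if_true]
  rw [Finset.prod_ite, Finset.prod_const, Finset.prod_const_one, mul_one]
  have hcard := Finset.card_filter_add_card_filter_not (s := Finset.Icc 1 k)
    (fun i ↦ m % (2 * k + 1) = i ∨ (m + i) % (2 * k + 1) = 0)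
  rw [card_filter_Icc_mod_eq_or_add_mod_eq_zero hm, Nat.card_Icc] at hcard
  congr 1
  omega

lemma prod_Icc_tprod_ite_inv_one_sub_pow {q : ℂ} (hq : ‖q‖ < 1) (k : ℕ) :
    ∏ i ∈ Finset.Icc 1 k, ∏' n : ℕ,
      (if ¬((n + 1) % (2 * k + 1) = 0 ∨ (n + 1) % (2 * k + 1) = i
          ∨ (n + 1 + i) % (2 * k + 1) = 0) then (1 - q ^ (n + 1))⁻¹ else 1)
      = ((∏' n : ℕ, (1 - (q ^ (2 * k + 1)) ^ (n + 1))) / ∏' n : ℕ, (1 - q ^ (n + 1)))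
          ^ (k - 1) := by
  rw [← Multipliable.tprod_finsetProd fun i _ ↦ multipliable_ite_inv_one_sub_pow hq _,
    tprod_congr fun n ↦ prod_Icc_ite_mod k (n + 1) _,
    (multipliable_ite_inv_one_sub_pow hq _).tprod_pow, tprod_ite_inv_one_sub_pow hq (2 * k)]

lemma sum_Icc_hbar_numerator (k m : ℕ) :
    ∑ i ∈ Finset.Icc 1 m,
      (6 * (i : ℂ) ^ 2 - 6 * i + 1 + 6 * (k : ℂ) ^ 2 - 12 * k * i + 5 * k)
      = (m : ℂ) * (2 * m ^ 2 - 1 + 6 * k ^ 2 - k - 6 * k * m) := by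
  induction m with
  | zero => simp
  | succ m ih =>
    rw [Finset.sum_Icc_succ_top (by omega), ih]
    push_cast
    ring

lemma sum_Icc_hbar (k : ℕ) :
    ∑ i ∈ Finset.Icc 1 k,
      (6 * (i : ℂ) ^ 2 - 6 * i + 1 + 6 * (k : ℂ) ^ 2 - 12 * k * i + 5 * k)
        / (12 * (2 * (k : ℂ) + 1))
      = (k : ℂ) * (k - 1) / 12 := by
  have h2k1 : 2 * (k : ℂ) + 1 ≠ 0 := by exact_mod_cast (2 * k).succ_ne_zero
  rw [← Finset.sum_div, sum_Icc_hbar_numerator,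
    div_eq_div_iff (mul_ne_zero (by norm_num) h2k1) (by norm_num)]
  ring

lemma dedekindEta_natCast_mul_div (N : ℕ) (τ : ℂ) :
    dedekindEta (N * τ) / dedekindEta τ
      = exp (2 * π * I * τ * ((N - 1) / 24))
        * ((∏' n : ℕ, (1 - (exp (2 * π * I * τ) ^ N) ^ (n + 1)))
          / ∏' n : ℕ, (1 - exp (2 * π * I * τ) ^ (n + 1))) := by
  have hexp : exp (2 * π * I * (N * τ)) = exp (2 * π * I * τ) ^ N := by
    rw [← exp_nat_mul]
    ring_nf
  rw [dedekindEta, dedekindEta, hexp, mul_div_mul_comm, ← exp_sub]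
  ring_nf

theorem product_of_modified_characters_general (k : ℕ) (τ : ℂ) (hτ : 0 < τ.im)
    (q : ℂ) (hq : q = Complex.exp (2 * π * I * τ)) (hbar : ℕ → ℂ)
    (hh : ∀ i, hbar i = (6 * (i : ℂ) ^ 2 - 6 * i + 1 + 6 * (k : ℂ) ^ 2 - 12 * k * i + 5 * k)
        / (12 * (2 * (k : ℂ) + 1)))
    (y : ℕ → ℂ)
    (hy : ∀ i, y i = Complex.exp (2 * π * I * τ * hbar i) * ∏' n : ℕ,
      if ¬((n + 1) % (2 * k + 1) = 0 ∨ (n + 1) % (2 * k + 1) = i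
          ∨ (n + 1 + i) % (2 * k + 1) = 0) then (1 - q ^ (n + 1))⁻¹ else 1) :
    ∏ i ∈ Finset.Icc 1 k, y i
        = Complex.exp (2 * π * I * τ * ((k : ℂ) * ((k : ℂ) - 1) / 12))
          * ((∏' n : ℕ, (1 - (q ^ (2 * k + 1)) ^ (n + 1))) / ∏' n : ℕ, (1 - q ^ (n + 1)))
              ^ (k - 1) ∧
      ∏ i ∈ Finset.Icc 1 k, y i
        = (dedekindEta ((2 * (k : ℂ) + 1) * τ) / dedekindEta τ) ^ (k - 1) := by
  have hq1 : ‖q‖ < 1 := hq ▸ UpperHalfPlane.norm_exp_two_pi_I_lt_one ⟨τ, hτ⟩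
  have hprefactor : ∏ i ∈ Finset.Icc 1 k, exp (2 * π * I * τ * hbar i)
      = exp (2 * π * I * τ * ((k : ℂ) * ((k : ℂ) - 1) / 12)) := by
    rw [← exp_sum, ← Finset.mul_sum, ← sum_Icc_hbar k]
    simp_rw [hh]
  have hq_form : ∏ i ∈ Finset.Icc 1 k, y i
      = exp (2 * π * I * τ * ((k : ℂ) * ((k : ℂ) - 1) / 12))
        * ((∏' n : ℕ, (1 - (q ^ (2 * k + 1)) ^ (n + 1))) / ∏' n : ℕ, (1 - q ^ (n + 1)))
            ^ (k - 1) := by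
    rw [Finset.prod_congr rfl fun i _ ↦ hy i, Finset.prod_mul_distrib, hprefactor,
      prod_Icc_tprod_ite_inv_one_sub_pow hq1]
  refine ⟨hq_form, hq_form.trans ?_⟩
  rw [show 2 * (k : ℂ) + 1 = ((2 * k + 1 : ℕ) : ℂ) by push_cast; ring,
    dedekindEta_natCast_mul_div, ← hq, mul_pow, ← exp_nat_mul]
  congr 2
  -- `k - 1` is truncated subtraction in `ℕ`; at `k = 0` both exponents vanish anyway
  rcases k with _ | k
  · simp
  · push_cast
    ring

/-- The product of all `k` modified characters of central charge `c_{2,2k+1}`: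
`∏_{i=1}^k yᵢ = q^{k(k-1)/12}((q^{2k+1};q^{2k+1})_∞/(q;q)_∞)^{k-1}
             = (η((2k+1)τ)/η(τ))^{k-1}`. -/
theorem product_of_modified_characters (k : ℕ) (hk : 2 ≤ k) (τ : ℂ) (hτ : 0 < τ.im)
    (q : ℂ) (hq : q = Complex.exp (2 * π * I * τ)) (hbar : ℕ → ℂ)
    (hh : ∀ i, hbar i = (6 * (i : ℂ) ^ 2 - 6 * i + 1 + 6 * (k : ℂ) ^ 2 - 12 * k * i + 5 * k)
        / (12 * (2 * (k : ℂ) + 1)))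
    (y : ℕ → ℂ)
    (hy : ∀ i, y i = Complex.exp (2 * π * I * τ * hbar i) * ∏' n : ℕ,
      if ¬((n + 1) % (2 * k + 1) = 0 ∨ (n + 1) % (2 * k + 1) = i
          ∨ (n + 1 + i) % (2 * k + 1) = 0) then (1 - q ^ (n + 1))⁻¹ else 1) :
    ∏ i ∈ Finset.Icc 1 k, y i
        = Complex.exp (2 * π * I * τ * ((k : ℂ) * ((k : ℂ) - 1) / 12))
          * ((∏' n : ℕ, (1 - (q ^ (2 * k + 1)) ^ (n + 1))) / ∏' n : ℕ, (1 - q ^ (n + 1)))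
              ^ (k - 1) ∧
      ∏ i ∈ Finset.Icc 1 k, y i
        = (dedekindEta ((2 * (k : ℂ) + 1) * τ) / dedekindEta τ) ^ (k - 1) :=
  product_of_modified_characters_general k τ hτ q hq hbar hh y hy
end
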